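/- Let A, B be real n×n matrices satisfying: (c1) A is entrywise nonnegative, (c2) B_{ij} ≤ A_{ij} for all i ≠ j, and (c3) there exists an entrywise positive vector u with (B−A)u entrywise positive. Set μ = ρ((B−A)⁻¹A) and ρ(A,B) = μ/(1+μ). Then the matrix ρ(A,B)·B − A is a singular M-matrix (i.e., an M-matrix that is not invertible). -/

import Mathlib

open Matrix

/-- Spectral radius of a real matrix: supremum of the absolute values of its
complex eigenvalues. -/
noncomputable def specRad {m : Type*} [Fintype m] [DecidableEq m] (M : Matrix m m ℝ) : ℝ :=
  sSup ((fun z : ℂ => ‖z‖) '' spectrum ℂ (M.map (algebraMap ℝ ℂ)))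

/-- Principal submatrix of `A` with rows and columns indexed by `J`. -/
def subm {n : ℕ} (A : Matrix (Fin n) (Fin n) ℝ) (J : Finset (Fin n)) :
    Matrix {i // i ∈ J} {i // i ∈ J} ℝ :=
  A.submatrix Subtype.val Subtype.val

/-- `X` is an M-matrix: `X = q•I − P` with `P ≥ 0` and `q ≥ ρ(P)`. -/
def IsMMatrix {m : Type*} [Fintype m] [DecidableEq m] (X : Matrix m m ℝ) : Prop :=
  ∃ q : ℝ, ∃ P : Matrix m m ℝ, (∀ i j, 0 ≤ P i j) ∧ X = q • 1 - P ∧ specRad P ≤ q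

/-- `X` is a nonsingular M-matrix: `X = q•I − P` with `P ≥ 0` and `q > ρ(P)`. -/
def IsNonsingMMatrix {m : Type*} [Fintype m] [DecidableEq m] (X : Matrix m m ℝ) : Prop :=
  ∃ q : ℝ, ∃ P : Matrix m m ℝ, (∀ i j, 0 ≤ P i j) ∧ X = q • 1 - P ∧ specRad P < q

/-!
A Z-matrix `C` admitting `u > 0` with `C u > 0` obeys a maximum principle (`0 ≤ C x → 0 ≤ x`),
hence is invertible with a nonnegative inverse. For a nonnegative `T`, the set of `s` for which
`s • 1 - T` admits such a `u` is open and upward closed, and it contains no `s ≤ ρ(T)`: the moduli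
of an eigenvector for an eigenvalue of modulus `ρ(T)` would violate the maximum principle. At its
infimum, a limit of the normalized vectors `(s • 1 - T)⁻¹ 1` is a nonnegative eigenvector, so the
infimum is `ρ(T)`. This is the weak Perron–Frobenius theorem together with the Collatz–Wielandt
bound: `s • x ≤ T x` for some nonzero `x ≥ 0` forces `s ≤ ρ(T)`.

With `C = B - A`, `T = C⁻¹ A ≥ 0` and `μ = ρ(T)` one has `(1 + μ) (ρ(A,B) B - A) = C (μ - T)`, so
the Perron vector of `T` lies in the kernel of `M = ρ(A,B) B - A`. If `M x = r x` with `x ≥ 0`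
nonzero and `r < 0`, then `y = T x - μ x` solves `C y = -(1 + μ) r x ≥ 0`, so `y ≥ 0` and, `C`
being a Z-matrix, `y ≥ ε x` for some `ε > 0`; this contradicts Collatz–Wielandt. Applied to the
Perron vector of `q - M` this gives `ρ(q - M) ≤ q`.
-/

open Filter Topology

namespace Matrix

variable {ι : Type*} [Fintype ι] [DecidableEq ι]

def IsSemipositive (C : Matrix ι ι ℝ) : Prop :=
  ∃ u : ι → ℝ, (∀ i, 0 < u i) ∧ ∀ i, 0 < (C *ᵥ u) i

omit [DecidableEq ι] in
lemma mul_apply_nonneg {A B : Matrix ι ι ℝ} (hA : ∀ i j, 0 ≤ A i j) (hB : ∀ i j, 0 ≤ B i j)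
    (i j : ι) : 0 ≤ (A * B) i j :=
  Finset.sum_nonneg fun k _ => mul_nonneg (hA i k) (hB k j)

section ZMatrix

variable {C : Matrix ι ι ℝ}

omit [DecidableEq ι] in
lemma mulVec_apply_nonpos_of_apply_eq_zero (hC : ∀ i j, i ≠ j → C i j ≤ 0) {y : ι → ℝ}
    (hy : 0 ≤ y) {i : ι} (hyi : y i = 0) : (C *ᵥ y) i ≤ 0 := by
  refine Finset.sum_nonpos fun j _ => ?_
  rcases eq_or_ne i j with rfl | hij
  · simp [hyi]
  · exact mul_nonpos_of_nonpos_of_nonneg (hC i j hij) (hy j)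

omit [DecidableEq ι] in
theorem nonneg_of_nonneg_mulVec (hC : ∀ i j, i ≠ j → C i j ≤ 0) (hsp : C.IsSemipositive)
    {x : ι → ℝ} (hx : 0 ≤ C *ᵥ x) : 0 ≤ x := by
  obtain ⟨u, hu, hCu⟩ := hsp
  by_contra hneg
  obtain ⟨j, hj⟩ : ∃ j, x j < 0 := by simpa [Pi.le_def] using hneg
  obtain ⟨i, -, hi⟩ :=
    Finset.exists_min_image Finset.univ (fun i => x i / u i) ⟨j, Finset.mem_univ j⟩
  set t := x i / u i
  have ht : t < 0 := (hi j (Finset.mem_univ j)).trans_lt (div_neg_of_neg_of_pos hj (hu j))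
  have hy : 0 ≤ x - t • u := fun k => by
    have := (le_div_iff₀ (hu k)).1 (hi k (Finset.mem_univ k))
    simp only [Pi.zero_apply, Pi.sub_apply, Pi.smul_apply, smul_eq_mul]
    linarith
  have hyi : (x - t • u) i = 0 := by
    simp [t, div_mul_cancel₀ _ (hu i).ne']
  have key := mulVec_apply_nonpos_of_apply_eq_zero hC hy hyi
  rw [mulVec_sub, mulVec_smul] at key
  simp only [Pi.sub_apply, Pi.smul_apply, smul_eq_mul] at key
  have hxi : 0 ≤ (C *ᵥ x) i := hx i
  linarith [mul_neg_of_neg_of_pos ht (hCu i)]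

theorem isUnit_det_of_isSemipositive (hC : ∀ i j, i ≠ j → C i j ≤ 0) (hsp : C.IsSemipositive) :
    IsUnit C.det := by
  rw [isUnit_iff_ne_zero, Ne, ← exists_mulVec_eq_zero_iff]
  rintro ⟨x, hx0, hx⟩
  have h₁ := nonneg_of_nonneg_mulVec hC hsp (x := x) (by simp [hx])
  have h₂ := nonneg_of_nonneg_mulVec hC hsp (x := -x) (by simp [mulVec_neg, hx])
  exact hx0 (le_antisymm (neg_nonneg.1 h₂) h₁)

theorem inv_nonneg_of_isSemipositive (hC : ∀ i j, i ≠ j → C i j ≤ 0) (hsp : C.IsSemipositive)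
    (i j : ι) : 0 ≤ C⁻¹ i j := by
  have hcol : C *ᵥ (C⁻¹ *ᵥ Pi.single j 1) = Pi.single j 1 := by
    rw [mulVec_mulVec, mul_nonsing_inv _ (isUnit_det_of_isSemipositive hC hsp), one_mulVec]
  have := nonneg_of_nonneg_mulVec hC hsp (x := C⁻¹ *ᵥ Pi.single j 1)
    (by rw [hcol]; exact Pi.single_nonneg.2 zero_le_one) i
  rwa [mulVec_single_one] at this

lemma mulVec_le_smul_of_diag_le (hC : ∀ i j, i ≠ j → C i j ≤ 0) {K : ℝ} (hK : ∀ i, C i i ≤ K)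
    {y : ι → ℝ} (hy : 0 ≤ y) : C *ᵥ y ≤ K • y := fun i => by
  have hrest : 0 ≤ y - y i • Pi.single i 1 := fun j => by
    rcases eq_or_ne j i with rfl | hji
    · simp
    · simpa [hji] using hy j
  have := mulVec_apply_nonpos_of_apply_eq_zero hC hrest (i := i) (by simp)
  rw [mulVec_sub, mulVec_smul, mulVec_single_one] at this
  simp only [Pi.sub_apply, Pi.smul_apply, smul_eq_mul, col_apply] at this ⊢
  have hyi : 0 ≤ y i := hy i
  nlinarith [hK i]

end ZMatrix

section Spectrum

theorem mem_spectrum_iff_exists_mulVec_eq_smul {K : Type*} [Field K]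
    {M : Matrix ι ι K} {z : K} : z ∈ spectrum K M ↔ ∃ v ≠ 0, M *ᵥ v = z • v := by
  rw [spectrum.mem_iff, Algebra.algebraMap_eq_smul_one, isUnit_iff_isUnit_det, isUnit_iff_ne_zero,
    not_not, ← exists_mulVec_eq_zero_iff]
  simp only [sub_mulVec, smul_mulVec, one_mulVec, sub_eq_zero, eq_comm]

theorem norm_le_specRad {M : Matrix ι ι ℝ} {z : ℂ}
    (hz : z ∈ spectrum ℂ (M.map (algebraMap ℝ ℂ))) : ‖z‖ ≤ specRad M :=
  le_csSup ((finite_spectrum _).image _).bddAbove ⟨z, hz, rfl⟩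

theorem exists_mem_spectrum_norm_eq_specRad [Nonempty ι] (M : Matrix ι ι ℝ) :
    ∃ z ∈ spectrum ℂ (M.map (algebraMap ℝ ℂ)), ‖z‖ = specRad M :=
  ((spectrum.nonempty_of_isAlgClosed_of_finiteDimensional ℂ _).image _).csSup_mem
    ((finite_spectrum _).image _)

theorem specRad_nonneg [Nonempty ι] (M : Matrix ι ι ℝ) : 0 ≤ specRad M := by
  obtain ⟨z, -, hz⟩ := exists_mem_spectrum_norm_eq_specRad M
  exact hz ▸ norm_nonneg z

theorem le_specRad_of_mulVec_eq_smul {M : Matrix ι ι ℝ} {v : ι → ℝ} (hv : v ≠ 0) {r : ℝ}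
    (h : M *ᵥ v = r • v) : r ≤ specRad M := by
  have hmem : (r : ℂ) ∈ spectrum ℂ (M.map (algebraMap ℝ ℂ)) := by
    refine mem_spectrum_iff_exists_mulVec_eq_smul.2 ⟨algebraMap ℝ ℂ ∘ v, ?_, funext fun i => ?_⟩
    · contrapose! hv
      exact funext fun i => by simpa using congrFun hv i
    · rw [← RingHom.map_mulVec, h]
      simp
  simpa using (le_abs_self r).trans (by simpa using norm_le_specRad hmem)

end Spectrum

section Nonnegative

variable {T : Matrix ι ι ℝ}

lemma smul_one_sub_mulVec (s : ℝ) (x : ι → ℝ) : (s • 1 - T) *ᵥ x = s • x - T *ᵥ x := by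
  rw [sub_mulVec, smul_mulVec, one_mulVec]

lemma mul_smul_one_sub_inv_mul {C : Matrix ι ι ℝ} (hC : IsUnit C.det) (A : Matrix ι ι ℝ) (s : ℝ) :
    C * (s • 1 - C⁻¹ * A) = s • C - A := by
  rw [Matrix.mul_sub, Matrix.mul_smul, Matrix.mul_one, ← Matrix.mul_assoc, mul_nonsing_inv _ hC,
    Matrix.one_mul]

omit [Fintype ι] in
lemma smul_one_sub_apply_nonpos (hT : ∀ i j, i ≠ j → 0 ≤ T i j) (s : ℝ) :
    ∀ i j, i ≠ j → (s • 1 - T) i j ≤ 0 := fun i j hij => by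
  simp [one_apply_ne hij, hT i j hij]

lemma IsSemipositive.smul_one_sub_mono {s t : ℝ} (hst : s ≤ t)
    (hs : (s • 1 - T).IsSemipositive) : (t • 1 - T).IsSemipositive := by
  obtain ⟨u, hu, hsu⟩ := hs
  refine ⟨u, hu, fun i => ?_⟩
  have := hsu i
  simp only [smul_one_sub_mulVec, Pi.sub_apply, Pi.smul_apply, smul_eq_mul] at this ⊢
  nlinarith [hu i]

lemma exists_isSemipositive_smul_one_sub (T : Matrix ι ι ℝ) :
    ∃ s : ℝ, (s • 1 - T).IsSemipositive := by
  refine ⟨1 + ∑ i, ∑ j, |T i j|, fun _ => 1, fun _ => one_pos, fun i => ?_⟩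
  have : (T *ᵥ fun _ => 1) i ≤ ∑ i, ∑ j, |T i j| :=
    calc (T *ᵥ fun _ => 1) i = ∑ j, T i j := by simp [mulVec, dotProduct]
      _ ≤ ∑ j, |T i j| := Finset.sum_le_sum fun j _ => le_abs_self _
      _ ≤ ∑ i, ∑ j, |T i j| := Finset.single_le_sum (f := fun i => ∑ j, |T i j|)
          (fun i _ => Finset.sum_nonneg fun j _ => abs_nonneg _) (Finset.mem_univ i)
  simp only [smul_one_sub_mulVec, Pi.sub_apply, Pi.smul_apply, smul_eq_mul, mul_one]
  linarith

omit [DecidableEq ι] in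
lemma isOpen_setOf_isSemipositive : IsOpen {C : Matrix ι ι ℝ | C.IsSemipositive} := by
  have : {C : Matrix ι ι ℝ | C.IsSemipositive} =
      ⋃ u ∈ {u : ι → ℝ | ∀ i, 0 < u i}, ⋂ i, {C | 0 < (C *ᵥ u) i} := by
    ext; simp [IsSemipositive]
  rw [this]
  exact isOpen_biUnion fun u _ => isOpen_iInter_of_finite fun i => isOpen_lt continuous_const
    ((continuous_apply i).comp (continuous_id.matrix_mulVec continuous_const))

lemma eq_zero_of_smul_le_mulVec (hT : ∀ i j, i ≠ j → 0 ≤ T i j) {s : ℝ}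
    (hs : (s • 1 - T).IsSemipositive) {x : ι → ℝ} (hx : 0 ≤ x) (hsx : s • x ≤ T *ᵥ x) :
    x = 0 := by
  have := nonneg_of_nonneg_mulVec (smul_one_sub_apply_nonpos hT s) hs (x := -x)
    (by rw [mulVec_neg, smul_one_sub_mulVec, neg_nonneg, sub_nonpos]; exact hsx)
  exact le_antisymm (neg_nonneg.1 this) hx

theorem specRad_lt_of_isSemipositive [Nonempty ι] (hT : ∀ i j, 0 ≤ T i j) {s : ℝ}
    (hs : (s • 1 - T).IsSemipositive) : specRad T < s := by
  obtain ⟨z, hz, hzρ⟩ := exists_mem_spectrum_norm_eq_specRad T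
  obtain ⟨w, hw0, hw⟩ := mem_spectrum_iff_exists_mulVec_eq_smul.1 hz
  by_contra! hle
  refine hw0 (funext fun i => norm_eq_zero.1 (congrFun (eq_zero_of_smul_le_mulVec
    (fun i j _ => hT i j) hs (x := fun i => ‖w i‖) (fun i => norm_nonneg _) fun i => ?_) i))
  show s * ‖w i‖ ≤ ∑ j, T i j * ‖w j‖
  calc s * ‖w i‖ ≤ ‖z‖ * ‖w i‖ := by gcongr; linarith
    _ = ‖(T.map (algebraMap ℝ ℂ) *ᵥ w) i‖ := by rw [hw]; simp
    _ ≤ ∑ j, T i j * ‖w j‖ := (norm_sum_le _ _).trans (by simp [abs_of_nonneg (hT i _)])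

lemma exists_mem_stdSimplex_of_isSemipositive [Nonempty ι] (hT : ∀ i j, i ≠ j → 0 ≤ T i j)
    {s : ℝ} (hs : (s • 1 - T).IsSemipositive) :
    ∃ w ∈ stdSimplex ℝ ι, ∃ d > 0, s • w - T *ᵥ w = fun _ => d := by
  have hZ := smul_one_sub_apply_nonpos hT s
  set x := (s • 1 - T)⁻¹ *ᵥ fun _ => 1
  have hx : (s • 1 - T) *ᵥ x = fun _ => 1 := by
    rw [mulVec_mulVec, mul_nonsing_inv _ (isUnit_det_of_isSemipositive hZ hs), one_mulVec]
  have hx0 : 0 ≤ x := nonneg_of_nonneg_mulVec hZ hs (by rw [hx]; exact fun _ => zero_le_one)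
  have hc : 0 < ∑ i, x i := by
    refine (Finset.sum_nonneg fun i _ => hx0 i).lt_of_ne fun h => ?_
    have hx_zero : x = 0 := funext fun i =>
      (Finset.sum_eq_zero_iff_of_nonneg fun i _ => hx0 i).1 h.symm i (Finset.mem_univ i)
    have := congrFun hx (Classical.arbitrary ι)
    rw [hx_zero, mulVec_zero] at this
    exact zero_ne_one this
  refine ⟨(∑ i, x i)⁻¹ • x, ⟨fun i => mul_nonneg (inv_nonneg.2 hc.le) (hx0 i), ?_⟩,
    (∑ i, x i)⁻¹, inv_pos.2 hc, ?_⟩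
  · simp [← Finset.mul_sum, hc.ne']
  · rw [mulVec_smul, smul_comm, ← smul_sub, ← smul_one_sub_mulVec, hx]
    ext; simp

lemma exists_mem_stdSimplex_of_forall_gt_isSemipositive [Nonempty ι]
    (hT : ∀ i j, i ≠ j → 0 ≤ T i j) {b : ℝ} (hb : ∀ s, b < s → (s • 1 - T).IsSemipositive) :
    ∃ w ∈ stdSimplex ℝ ι, ∃ d ≥ 0, b • w - T *ᵥ w = fun _ => d := by
  choose w hw d hd hwd using fun k : ℕ =>
    exists_mem_stdSimplex_of_isSemipositive hT (hb (b + 1 / (k + 1)) (by simp; positivity))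
  obtain ⟨w₀, hw₀, φ, hφ, hlim⟩ := (isCompact_stdSimplex ℝ ι).tendsto_subseq hw
  have hs : Tendsto (fun k => b + 1 / ((φ k : ℝ) + 1)) atTop (𝓝 b) := by
    simpa using (tendsto_const_nhds (x := b)).add
      ((tendsto_one_div_add_atTop_nhds_zero_nat (𝕜 := ℝ)).comp hφ.tendsto_atTop)
  have hF : Tendsto (fun k => fun _ : ι => d (φ k)) atTop (𝓝 (b • w₀ - T *ᵥ w₀)) := by
    rw [show (fun k => fun _ : ι => d (φ k)) = _ from funext fun k => (hwd (φ k)).symm]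
    exact (hs.smul hlim).sub
      ((continuous_const.matrix_mulVec continuous_id).tendsto w₀ |>.comp hlim)
  have hd_lim (i : ι) : Tendsto (fun k => d (φ k)) atTop (𝓝 ((b • w₀ - T *ᵥ w₀) i)) :=
    ((continuous_apply i).tendsto _).comp hF
  set i₀ := Classical.arbitrary ι
  refine ⟨w₀, hw₀, (b • w₀ - T *ᵥ w₀) i₀,
    ge_of_tendsto (hd_lim i₀) (Eventually.of_forall fun k => (hd (φ k)).le), ?_⟩
  exact funext fun i => tendsto_nhds_unique (hd_lim i) (hd_lim i₀)

lemma exists_eigenvector_or_isSemipositive [Nonempty ι] (hT : ∀ i j, i ≠ j → 0 ≤ T i j)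
    {b : ℝ} (hb : ∀ s, b < s → (s • 1 - T).IsSemipositive) :
    (∃ v, 0 ≤ v ∧ v ≠ 0 ∧ T *ᵥ v = b • v) ∨ (b • 1 - T).IsSemipositive := by
  obtain ⟨w, ⟨hw0, hw1⟩, d, hd, hwd⟩ := exists_mem_stdSimplex_of_forall_gt_isSemipositive hT hb
  rcases hd.eq_or_lt with rfl | hd
  · refine .inl ⟨w, hw0, ?_, (sub_eq_zero.1 hwd).symm⟩
    rintro rfl
    simp at hw1
  · refine .inr ⟨w, fun i => (hw0 i).lt_of_ne fun hwi => ?_, fun i => ?_⟩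
    · have hTw := mulVec_apply_nonpos_of_apply_eq_zero (C := -T)
        (fun i j hij => neg_nonpos.2 (hT i j hij)) hw0 hwi.symm
      have := congrFun hwd i
      simp only [neg_mulVec, Pi.neg_apply, Pi.sub_apply, Pi.smul_apply, smul_eq_mul] at hTw this
      rw [← hwi] at this
      linarith
    · rw [smul_one_sub_mulVec, hwd]
      exact hd

theorem exists_nonneg_eigenvector_and_isSemipositive_of_specRad_lt [Nonempty ι]
    (hT : ∀ i j, 0 ≤ T i j) :
    (∃ v, 0 ≤ v ∧ v ≠ 0 ∧ T *ᵥ v = specRad T • v) ∧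
      ∀ s, specRad T < s → (s • 1 - T).IsSemipositive := by
  set G := {s : ℝ | (s • 1 - T).IsSemipositive}
  have hG : ∀ s ∈ G, specRad T < s := fun s hs => specRad_lt_of_isSemipositive hT hs
  have hne : G.Nonempty := exists_isSemipositive_smul_one_sub T
  have hbdd : BddBelow G := ⟨specRad T, fun s hs => (hG s hs).le⟩
  have habove : ∀ s, sInf G < s → s ∈ G := fun s hs => by
    obtain ⟨t, ht, hts⟩ := exists_lt_of_csInf_lt hne hs
    exact ht.smul_one_sub_mono hts.le
  have hnot : sInf G ∉ G := fun h => by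
    have hopen : IsOpen G := isOpen_setOf_isSemipositive.preimage
      ((continuous_id.smul continuous_const).sub continuous_const)
    obtain ⟨t, ht, htG⟩ := Eventually.exists_lt (p := (· ∈ G)) (hopen.mem_nhds h)
    exact (csInf_le hbdd htG).not_gt ht
  obtain ⟨v, hv0, hv, hTv⟩ :=
    (exists_eigenvector_or_isSemipositive (fun i j _ => hT i j) habove).resolve_right hnot
  have heq : sInf G = specRad T :=
    le_antisymm (le_specRad_of_mulVec_eq_smul hv hTv) (le_csInf hne fun s hs => (hG s hs).le)
  exact ⟨⟨v, hv0, hv, heq ▸ hTv⟩, fun s hs => habove s (heq ▸ hs)⟩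

theorem exists_nonneg_mulVec_eq_specRad_smul [Nonempty ι] (hT : ∀ i j, 0 ≤ T i j) :
    ∃ v, 0 ≤ v ∧ v ≠ 0 ∧ T *ᵥ v = specRad T • v :=
  (exists_nonneg_eigenvector_and_isSemipositive_of_specRad_lt hT).1

theorem le_specRad_of_smul_le_mulVec [Nonempty ι] (hT : ∀ i j, 0 ≤ T i j) {x : ι → ℝ}
    (hx : 0 ≤ x) (hx0 : x ≠ 0) {s : ℝ} (hsx : s • x ≤ T *ᵥ x) : s ≤ specRad T := by
  by_contra! hs
  exact hx0 (eq_zero_of_smul_le_mulVec (fun i j _ => hT i j)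
    ((exists_nonneg_eigenvector_and_isSemipositive_of_specRad_lt hT).2 s hs) hx hsx)

end Nonnegative

theorem isMMatrix_of_forall_nonneg_eigenvalue [Nonempty ι] {M : Matrix ι ι ℝ}
    (hM : ∀ i j, i ≠ j → M i j ≤ 0)
    (h : ∀ x, 0 ≤ x → x ≠ 0 → ∀ r : ℝ, M *ᵥ x = r • x → 0 ≤ r) : IsMMatrix M := by
  set q := ∑ i, |M i i|
  have hP : ∀ i j, 0 ≤ (q • 1 - M) i j := fun i j => by
    rcases eq_or_ne i j with rfl | hij
    · simpa using (le_abs_self _).trans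
        (Finset.single_le_sum (fun i _ => abs_nonneg (M i i)) (Finset.mem_univ i))
    · simp [one_apply_ne hij, hM i j hij]
  obtain ⟨x, hx0, hx, hPx⟩ := exists_nonneg_mulVec_eq_specRad_smul hP
  refine ⟨q, q • 1 - M, hP, (sub_sub_cancel _ _).symm, sub_nonneg.1 (h x hx0 hx _ ?_)⟩
  rw [smul_one_sub_mulVec] at hPx
  rw [sub_smul, ← hPx, sub_sub_cancel]

theorem nonneg_of_mulVec_specRad_smul_sub_mulVec_eq_smul [Nonempty ι] {C T : Matrix ι ι ℝ}
    (hC : ∀ i j, i ≠ j → C i j ≤ 0) (hsp : C.IsSemipositive) (hT : ∀ i j, 0 ≤ T i j)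
    {x : ι → ℝ} (hx : 0 ≤ x) (hx0 : x ≠ 0) {r : ℝ}
    (hr : C *ᵥ (specRad T • x - T *ᵥ x) = r • x) : 0 ≤ r := by
  by_contra! hr0
  set y := T *ᵥ x - specRad T • x
  have hCy : C *ᵥ y = (-r) • x := by
    rw [show y = -(specRad T • x - T *ᵥ x) from (neg_sub _ _).symm, mulVec_neg, hr, neg_smul]
  have hy : 0 ≤ y := nonneg_of_nonneg_mulVec hC hsp (hCy ▸ smul_nonneg (by linarith) hx)
  set K := 1 + ∑ i, |C i i|
  have hK : 0 < K := by positivity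
  have hCK : ∀ i, C i i ≤ K := fun i => by
    have := (le_abs_self (C i i)).trans
      (Finset.single_le_sum (fun i _ => abs_nonneg (C i i)) (Finset.mem_univ i))
    linarith
  have hxy : (specRad T + -r / K) • x ≤ T *ᵥ x := fun i => by
    have h₁ := mulVec_le_smul_of_diag_le hC hCK hy i
    have h₂ : 0 ≤ x i := hx i
    rw [hCy] at h₁
    simp only [y, Pi.smul_apply, Pi.sub_apply, smul_eq_mul] at h₁ ⊢
    have : -r / K * x i ≤ (T *ᵥ x) i - specRad T * x i := by
      rw [div_mul_eq_mul_div, div_le_iff₀ hK]; linarith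
    linarith
  have := le_specRad_of_smul_le_mulVec hT hx hx0 hxy
  linarith [div_pos (neg_pos.2 hr0) hK]

end Matrix

/-- Under (c1)–(c3), the matrix `ρ(A,B)·B − A` is a singular M-matrix: it is an
M-matrix and it is not invertible. -/
theorem stmt_6 {n : ℕ} (hn : 0 < n) (A B : Matrix (Fin n) (Fin n) ℝ)
    (hc1 : ∀ i j, 0 ≤ A i j)
    (hc2 : ∀ i j, i ≠ j → B i j ≤ A i j)
    (hc3 : ∃ u : Fin n → ℝ, (∀ i, 0 < u i) ∧ ∀ i, 0 < (B - A).mulVec u i)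
    (μ ρAB : ℝ) (hμ : μ = specRad ((B - A)⁻¹ * A)) (hρ : ρAB = μ / (1 + μ)) :
    IsMMatrix (ρAB • B - A) ∧ ¬ IsUnit (ρAB • B - A).det := by
  have : Nonempty (Fin n) := ⟨⟨0, hn⟩⟩
  set C := B - A
  set T := C⁻¹ * A
  have hC : ∀ i j, i ≠ j → C i j ≤ 0 := fun i j hij => sub_nonpos.2 (hc2 i j hij)
  have hT : ∀ i j, 0 ≤ T i j := mul_apply_nonneg (inv_nonneg_of_isSemipositive hC hc3) hc1
  have hμ0 : 0 ≤ μ := hμ ▸ specRad_nonneg T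
  have hpencil (x : Fin n → ℝ) : (1 + μ) • ((ρAB • B - A) *ᵥ x) = C *ᵥ (μ • x - T *ᵥ x) := by
    have : (1 + μ) • (ρAB • B - A) = μ • C - A := by
      rw [hρ, smul_sub, smul_smul, mul_div_cancel₀ _ (by positivity), add_smul, one_smul, smul_sub]
      abel
    rw [← smul_one_sub_mulVec, mulVec_mulVec,
      mul_smul_one_sub_inv_mul (isUnit_det_of_isSemipositive hC hc3), ← this, smul_mulVec]
  have hZ : ∀ i j, i ≠ j → (ρAB • B - A) i j ≤ 0 := fun i j hij => by
    have h₀ : 0 ≤ ρAB := hρ ▸ by positivity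
    have h₁ : ρAB ≤ 1 := hρ ▸ (div_le_one (by positivity)).2 (by linarith)
    simp only [Matrix.sub_apply, Matrix.smul_apply, smul_eq_mul]
    nlinarith [hc1 i j, hc2 i j hij]
  constructor
  · refine isMMatrix_of_forall_nonneg_eigenvalue hZ fun x hx hx0 r hr => ?_
    have := nonneg_of_mulVec_specRad_smul_sub_mulVec_eq_smul hC hc3 hT hx hx0 (r := (1 + μ) * r)
      (by rw [← hμ, ← hpencil, hr, smul_smul])
    exact (mul_nonneg_iff_of_pos_left (by positivity)).1 this
  · obtain ⟨v, -, hv, hTv⟩ := exists_nonneg_mulVec_eq_specRad_smul hT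
    rw [isUnit_iff_ne_zero, not_not, ← exists_mulVec_eq_zero_iff]
    have : (1 + μ) • ((ρAB • B - A) *ᵥ v) = 0 := by
      rw [hpencil, hTv, ← hμ, sub_self, mulVec_zero]
    exact ⟨v, hv, (smul_eq_zero.1 this).resolve_left (by positivity)⟩
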